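/- The map sending an r-tuple ν = (ν^{(1)}, …, ν^{(r)}) of partitions to the sequence (d_0(ν), d_1(ν), …, d_s(ν)), where s is the largest part occurring in any ν^{(k)} (s = 0 if all are empty), is a bijection from the set of r-tuples ν of partitions satisfying P^{(k)}_n(d_n(ν)) ≥ 0 for all n ≥ 1 and 1 ≤ k ≤ r onto the set of valid labels for the data (ℓ_a, m_a); moreover under this bijection, for 1 ≤ n ≤ s, the k-th coordinate of δ_n − δ_{n+1} equals ν^{(k)}_n. -/

import Mathlib

open Finset

/-- `P^{(k)}_n(d)` for the data `(ℓ_a, m_a)` with `N` factors: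
`Σ_a min(n, m_a)·[k = ℓ_a] − Σ_j c_{jk}·d(j)`. -/
def Pfun {r N : ℕ} (C : Matrix (Fin r) (Fin r) ℤ) (ℓ : Fin N → Fin r) (m : Fin N → ℕ)
    (n : ℕ) (k : Fin r) (d : Fin r → ℤ) : ℤ :=
  (∑ a : Fin N, (min n (m a) : ℤ) * (if k = ℓ a then 1 else 0)) - ∑ j : Fin r, C j k * d j

/-- The `n`-th term `d_n` of a label presented as a list `(d_0, …, d_s)`. -/
def dAt {r : ℕ} (L : List (Fin r → ℤ)) (n : ℕ) : Fin r → ℤ := L.getD n 0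

/-- `δ_i = d_i − d_{i−1}` for `1 ≤ i ≤ s`, and `δ_i = 0` for `i > s` (so `δ_{s+1} = 0`). -/
def deltaAt {r : ℕ} (L : List (Fin r → ℤ)) (i : ℕ) : Fin r → ℤ :=
  if i < L.length then dAt L i - dAt L (i - 1) else 0

/-- A valid label `(d_0, …, d_s)` for the data `(ℓ_a, m_a)`:
(i) `0 = d_0 ≺ d_1 ≺ ⋯ ≺ d_s`, (ii) `P^{(k)}_n(d_n) ≥ 0` for `0 ≤ n ≤ s`, `k`,
(iii) `δ_i ≽ δ_{i+1}` for `1 ≤ i ≤ s` (with `δ_{s+1} = 0`). -/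
def IsValidLabel {r N : ℕ} (C : Matrix (Fin r) (Fin r) ℤ) (ℓ : Fin N → Fin r)
    (m : Fin N → ℕ) (L : List (Fin r → ℤ)) : Prop :=
  L ≠ [] ∧ dAt L 0 = 0 ∧
  (∀ i, 1 ≤ i → i < L.length → dAt L (i - 1) < dAt L i) ∧
  (∀ n, n < L.length → ∀ k, 0 ≤ Pfun C ℓ m n k (dAt L n)) ∧
  (∀ i, 1 ≤ i → i < L.length → deltaAt L (i + 1) ≤ deltaAt L i)

/-- `binom(a, b)` for integers, with `binom(a, b) = 0` whenever `a < b`. -/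
def ibinom (a b : ℤ) : ℕ := if a < b then 0 else Nat.choose a.toNat b.toNat

/-- The multiplicity `mult(𝐝) = Π_{n=1}^s Π_k binom(P^{(k)}_n(d_n) + (δ_n − δ_{n+1})(k), (δ_n − δ_{n+1})(k))`. -/
def mult {r N : ℕ} (C : Matrix (Fin r) (Fin r) ℤ) (ℓ : Fin N → Fin r) (m : Fin N → ℕ)
    (L : List (Fin r → ℤ)) : ℕ :=
  ∏ n ∈ Finset.Icc 1 (L.length - 1), ∏ k : Fin r,
    ibinom (Pfun C ℓ m n k (dAt L n) + (deltaAt L n k - deltaAt L (n + 1) k))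
      (deltaAt L n k - deltaAt L (n + 1) k)

/-- `d_n(ν)(k) = Σ_{h≥1} min(n, h)·ν^{(k)}_h` for a tuple of partitions given as multisets
of (positive) parts. -/
def dnu' {r : ℕ} (ν : Fin r → Multiset ℕ) (n : ℕ) : Fin r → ℤ :=
  fun k => ((ν k).map fun h => (min n h : ℤ)).sum

/-- The largest part occurring in any `ν^{(k)}` (0 if all are empty). -/
def snu {r : ℕ} (ν : Fin r → Multiset ℕ) : ℕ :=
  Finset.univ.sup fun k : Fin r => (ν k).sup

/-- The label `(d_0(ν), d_1(ν), …, d_s(ν))` attached to a tuple of partitions. -/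
def toLabel {r : ℕ} (ν : Fin r → Multiset ℕ) : List (Fin r → ℤ) :=
  (List.range (snu ν + 1)).map (dnu' ν)

/-!
A tuple `ν` is recovered from its label through the second differences: `δ_n(ν)(k)` counts the
parts of `ν^{(k)}` that are `≥ n`, so `δ_n − δ_{n+1}` counts the parts equal to `n`. Conversely a
label is determined by its length, by `d_0 = 0` and by its second differences (the `δ_n` are
recovered downwards from `δ_{s+1} = 0`, then the `d_n` upwards); condition (iii) says these
are natural numbers, so they are the multiplicities of a tuple of partitions, and condition (i)
at `n = s` makes `s` its largest part. The positivity
conditions match because `d_n(ν) = d_s(ν)` for `n ≥ s` while `P^{(k)}_n(d)` increases with `n`.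
-/

theorem Multiset.countP_lt_eq_countP_succ_lt_add_count (s : Multiset ℕ) (n : ℕ) :
    s.countP (n < ·) = s.countP (n + 1 < ·) + s.count (n + 1) := by
  induction s using Multiset.induction_on with
  | empty => simp
  | cons a s ih =>
    simp only [Multiset.countP_cons, Multiset.count_cons, ih]
    split_ifs <;> omega

theorem Multiset.sum_map_min_succ_sub_sum_map_min (s : Multiset ℕ) (n : ℕ) :
    (s.map fun h : ℕ => min ((n : ℤ) + 1) h).sum - (s.map fun h : ℕ => min (n : ℤ) h).sum =
      s.countP (n < ·) := by
  induction s using Multiset.induction_on with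
  | empty => simp
  | cons a s ih =>
    simp only [Multiset.map_cons, Multiset.sum_cons, Multiset.countP_cons, Nat.cast_add, ← ih]
    split_ifs <;> omega

section Pfun

variable {r N : ℕ} (C : Matrix (Fin r) (Fin r) ℤ) (ℓ : Fin N → Fin r) (m : Fin N → ℕ)

theorem Pfun_monotone (k : Fin r) (d : Fin r → ℤ) : Monotone fun n => Pfun C ℓ m n k d := by
  intro n n' h
  simp only [Pfun]
  gcongr

theorem Pfun_zero_zero (k : Fin r) : Pfun C ℓ m 0 k 0 = 0 := by
  simp [Pfun]

end Pfun

section Label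

variable {r : ℕ} {L L' : List (Fin r → ℤ)}

theorem deltaAt_of_length_le {n : ℕ} (h : L.length ≤ n) : deltaAt L n = 0 := by
  rw [deltaAt, if_neg (by omega)]

theorem dAt_succ {n : ℕ} (h : n + 1 < L.length) :
    dAt L (n + 1) = dAt L n + deltaAt L (n + 1) := by
  rw [deltaAt, if_pos h, Nat.add_sub_cancel, add_sub_cancel]

theorem eq_of_dAt_zero_eq_of_deltaAt_eq (hlen : L.length = L'.length) (h0 : dAt L 0 = dAt L' 0)
    (hδ : ∀ n, 1 ≤ n → deltaAt L n = deltaAt L' n) : L = L' := by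
  have hd : ∀ n, n < L.length → dAt L n = dAt L' n := by
    intro n hn
    induction n with
    | zero => exact h0
    | succ n ih => rw [dAt_succ hn, dAt_succ (hlen ▸ hn), ih (by omega), hδ _ n.succ_pos]
  refine List.ext_getElem hlen fun n hn hn' => ?_
  simpa [dAt, List.getD_eq_getElem, hn, hn'] using hd n hn

theorem deltaAt_eq_of_deltaAt_sub_deltaAt_succ_eq (hlen : L.length = L'.length)
    (h : ∀ n, 1 ≤ n → n < L.length →
      deltaAt L n - deltaAt L (n + 1) = deltaAt L' n - deltaAt L' (n + 1))
    {n : ℕ} (hn : 1 ≤ n) : deltaAt L n = deltaAt L' n := by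
  obtain ⟨j, hj⟩ : ∃ j, L.length - n = j := ⟨_, rfl⟩
  induction j generalizing n with
  | zero => rw [deltaAt_of_length_le (by omega), deltaAt_of_length_le (by omega)]
  | succ j ih =>
    have hsucc := h n hn (by omega)
    rw [ih (n := n + 1) (by omega) (by omega)] at hsucc
    exact sub_left_injective hsucc

theorem eq_of_deltaAt_sub_deltaAt_succ_eq (hlen : L.length = L'.length)
    (h0 : dAt L 0 = dAt L' 0)
    (h : ∀ n, 1 ≤ n → n < L.length →
      deltaAt L n - deltaAt L (n + 1) = deltaAt L' n - deltaAt L' (n + 1)) : L = L' :=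
  eq_of_dAt_zero_eq_of_deltaAt_eq hlen h0 fun _ hn =>
    deltaAt_eq_of_deltaAt_sub_deltaAt_succ_eq hlen h hn

end Label

section toLabel

variable {r : ℕ} (ν : Fin r → Multiset ℕ)

-- As elaborated, `dnu'` sums over `ν k` lifted (monadically) to a multiset of integers.
theorem dnu'_apply (n : ℕ) (k : Fin r) :
    dnu' ν n k = ((ν k).map fun h : ℕ => min (n : ℤ) h).sum := by
  simp [dnu', Multiset.bind_singleton, Multiset.map_map]

theorem dnu'_zero : dnu' ν 0 = 0 := by
  funext k
  simp [dnu'_apply]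

theorem le_snu_of_mem {k : Fin r} {p : ℕ} (hp : p ∈ ν k) : p ≤ snu ν :=
  (Multiset.le_sup hp).trans (Finset.le_sup (f := fun k => (ν k).sup) (Finset.mem_univ k))

theorem exists_mem_le_of_le_snu {n : ℕ} (hn₀ : 0 < n) (hn : n ≤ snu ν) :
    ∃ k, ∃ p ∈ ν k, n ≤ p := by
  by_contra! hlt
  have : snu ν ≤ n - 1 :=
    Finset.sup_le fun k _ => Multiset.sup_le.mpr fun p hp => Nat.le_sub_one_of_lt (hlt k p hp)
  omega

theorem dnu'_of_snu_le {n : ℕ} (hn : snu ν ≤ n) : dnu' ν n = dnu' ν (snu ν) := by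
  funext k
  simp only [dnu'_apply]
  refine congrArg Multiset.sum (Multiset.map_congr rfl fun p hp => ?_)
  have := le_snu_of_mem ν hp
  omega

theorem toLabel_length : (toLabel ν).length = snu ν + 1 := by
  simp [toLabel]

theorem dAt_toLabel {n : ℕ} (hn : n ≤ snu ν) : dAt (toLabel ν) n = dnu' ν n := by
  simp [dAt, toLabel, Nat.lt_succ_of_le hn]

theorem dnu'_eq_dAt_toLabel_min (n : ℕ) : dnu' ν n = dAt (toLabel ν) (min n (snu ν)) := by
  rw [dAt_toLabel ν (min_le_right _ _)]
  rcases le_total n (snu ν) with h | h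
  · rw [min_eq_left h]
  · rw [min_eq_right h, dnu'_of_snu_le ν h]

theorem deltaAt_toLabel_succ (n : ℕ) (k : Fin r) :
    deltaAt (toLabel ν) (n + 1) k = (ν k).countP (n < ·) := by
  rcases lt_or_ge n (snu ν) with h | h
  · rw [deltaAt, if_pos (by rw [toLabel_length]; omega), Nat.add_sub_cancel,
      dAt_toLabel ν h, dAt_toLabel ν (by omega), Pi.sub_apply, dnu'_apply, dnu'_apply,
      Nat.cast_succ, Multiset.sum_map_min_succ_sub_sum_map_min]
  · rw [deltaAt_of_length_le (by rw [toLabel_length]; omega), Pi.zero_apply,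
      eq_comm, Nat.cast_eq_zero, Multiset.countP_eq_zero]
    exact fun p hp => not_lt.mpr ((le_snu_of_mem ν hp).trans h)

theorem deltaAt_toLabel_sub_deltaAt_succ {n : ℕ} (hn : 1 ≤ n) (k : Fin r) :
    deltaAt (toLabel ν) n k - deltaAt (toLabel ν) (n + 1) k = (ν k).count n := by
  obtain ⟨n, rfl⟩ := Nat.exists_eq_add_of_le' hn
  rw [deltaAt_toLabel_succ, deltaAt_toLabel_succ,
    Multiset.countP_lt_eq_countP_succ_lt_add_count]
  push_cast
  ring

end toLabel

section Valid

variable {r N : ℕ} (C : Matrix (Fin r) (Fin r) ℤ) (ℓ : Fin N → Fin r) (m : Fin N → ℕ)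
  (ν : Fin r → Multiset ℕ)

theorem forall_Pfun_dnu'_nonneg_iff :
    (∀ n, 1 ≤ n → ∀ k, 0 ≤ Pfun C ℓ m n k (dnu' ν n)) ↔
      ∀ n < (toLabel ν).length, ∀ k, 0 ≤ Pfun C ℓ m n k (dAt (toLabel ν) n) := by
  rw [toLabel_length]
  constructor
  · intro hP n hn k
    rw [dAt_toLabel ν (by omega)]
    rcases Nat.eq_zero_or_pos n with rfl | hpos
    · rw [dnu'_zero, Pfun_zero_zero]
    · exact hP n hpos k
  · intro hP n _ k
    rw [dnu'_eq_dAt_toLabel_min]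
    exact (hP _ (by omega) k).trans (Pfun_monotone C ℓ m k _ (min_le_left n (snu ν)))

theorem isValidLabel_toLabel
    (hP : ∀ n < (toLabel ν).length, ∀ k, 0 ≤ Pfun C ℓ m n k (dAt (toLabel ν) n)) :
    IsValidLabel C ℓ m (toLabel ν) := by
  refine ⟨List.ne_nil_of_length_pos (by simp [toLabel_length]), ?_, ?_, hP, ?_⟩
  · rw [dAt_toLabel ν (Nat.zero_le _), dnu'_zero]
  · intro i hi₁ hi₂
    rw [toLabel_length] at hi₂
    obtain ⟨i, rfl⟩ := Nat.exists_eq_add_of_le' hi₁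
    rw [Nat.add_sub_cancel]
    have hδ : ∀ k,
        dAt (toLabel ν) (i + 1) k - dAt (toLabel ν) i k = (ν k).countP (i < ·) := by
      intro k
      rw [← deltaAt_toLabel_succ, deltaAt, if_pos (by rw [toLabel_length]; omega)]
      rfl
    obtain ⟨k, p, hp, hip⟩ := exists_mem_le_of_le_snu ν i.succ_pos (by omega)
    refine Pi.lt_def.mpr ⟨fun k => ?_, k, ?_⟩
    · rw [← sub_nonneg, hδ k]
      positivity
    · rw [← sub_pos, hδ k]
      exact_mod_cast Multiset.countP_pos.mpr ⟨p, hp, hip⟩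
  · intro i hi₁ _ k
    obtain ⟨i, rfl⟩ := Nat.exists_eq_add_of_le' hi₁
    rw [deltaAt_toLabel_succ, deltaAt_toLabel_succ,
      Multiset.countP_lt_eq_countP_succ_lt_add_count _ i]
    exact Int.ofNat_le.mpr (Nat.le_add_right _ _)

end Valid

section invLabel

variable {r : ℕ}

def invLabel (L : List (Fin r → ℤ)) : Fin r → Multiset ℕ := fun k =>
  ∑ n ∈ Icc 1 (L.length - 1), Multiset.replicate (deltaAt L n k - deltaAt L (n + 1) k).toNat n

variable {L : List (Fin r → ℤ)}

theorem count_invLabel (k : Fin r) (n : ℕ) :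
    (invLabel L k).count n =
      if n ∈ Icc 1 (L.length - 1) then (deltaAt L n k - deltaAt L (n + 1) k).toNat else 0 := by
  simp only [invLabel, Multiset.count_sum', Multiset.count_replicate]
  rw [Finset.sum_ite_eq']

theorem mem_Icc_of_mem_invLabel {k : Fin r} {p : ℕ} (hp : p ∈ invLabel L k) :
    p ∈ Icc 1 (L.length - 1) := by
  rw [← Multiset.count_pos, count_invLabel] at hp
  split_ifs at hp with h
  · exact h
  · exact absurd hp (lt_irrefl 0)

theorem snu_invLabel (hstrict : ∀ i, 1 ≤ i → i < L.length → dAt L (i - 1) < dAt L i) :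
    snu (invLabel L) = L.length - 1 := by
  refine le_antisymm (Finset.sup_le fun k _ => Multiset.sup_le.mpr fun p hp =>
    (Finset.mem_Icc.mp (mem_Icc_of_mem_invLabel hp)).2) ?_
  rcases Nat.eq_zero_or_pos (L.length - 1) with h | hpos
  · omega
  obtain ⟨-, k, hk⟩ := Pi.lt_def.mp (hstrict _ hpos (by omega))
  have hcount : 0 < (invLabel L k).count (L.length - 1) := by
    rw [count_invLabel, if_pos (Finset.mem_Icc.mpr ⟨hpos, le_rfl⟩),
      deltaAt_of_length_le (n := L.length - 1 + 1) (by omega), deltaAt, if_pos (by omega)]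
    simp only [Pi.sub_apply, Pi.zero_apply, sub_zero]
    omega
  exact le_snu_of_mem _ (Multiset.count_pos.mp hcount)

theorem toLabel_invLabel (hL : L ≠ []) (h0 : dAt L 0 = 0)
    (hstrict : ∀ i, 1 ≤ i → i < L.length → dAt L (i - 1) < dAt L i)
    (hmono : ∀ i, 1 ≤ i → i < L.length → deltaAt L (i + 1) ≤ deltaAt L i) :
    toLabel (invLabel L) = L := by
  have hlen : 0 < L.length := List.length_pos_iff.mpr hL
  refine eq_of_deltaAt_sub_deltaAt_succ_eq (by rw [toLabel_length, snu_invLabel hstrict]; omega)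
    (by rw [dAt_toLabel _ (Nat.zero_le _), dnu'_zero, h0]) fun n hn₁ hn₂ => funext fun k => ?_
  rw [toLabel_length, snu_invLabel hstrict] at hn₂
  rw [Pi.sub_apply, deltaAt_toLabel_sub_deltaAt_succ _ hn₁, count_invLabel,
    if_pos (Finset.mem_Icc.mpr ⟨hn₁, by omega⟩),
    Int.toNat_of_nonneg (sub_nonneg.mpr (hmono n hn₁ (by omega) k))]
  rfl

theorem invLabel_toLabel (ν : Fin r → Multiset ℕ) (hpos : ∀ k, ∀ p ∈ ν k, 0 < p) :
    invLabel (toLabel ν) = ν := by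
  funext k
  ext n
  rw [count_invLabel, toLabel_length, Nat.add_sub_cancel]
  split_ifs with h
  · rw [Finset.mem_Icc] at h
    rw [deltaAt_toLabel_sub_deltaAt_succ ν h.1, Int.toNat_natCast]
  · refine (Multiset.count_eq_zero.mpr fun hn => h ?_).symm
    exact Finset.mem_Icc.mpr ⟨hpos k n hn, le_snu_of_mem ν hn⟩

end invLabel

theorem stmt1_general {r N : ℕ}
    (C : Matrix (Fin r) (Fin r) ℤ)
    (ℓ : Fin N → Fin r) (m : Fin N → ℕ)
    (A : Set (Fin r → Multiset ℕ))
    (hA : A = {ν | (∀ k, ∀ p ∈ ν k, 0 < p) ∧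
      ∀ n, 1 ≤ n → ∀ k, 0 ≤ Pfun C ℓ m n k (dnu' ν n)}) :
    Set.BijOn toLabel A {L | IsValidLabel C ℓ m L} ∧
    ∀ ν ∈ A, ∀ n, 1 ≤ n → n ≤ snu ν → ∀ k,
      deltaAt (toLabel ν) n k - deltaAt (toLabel ν) (n + 1) k = ((ν k).count n : ℤ) := by
  subst hA
  refine ⟨Set.InvOn.bijOn (f' := invLabel) ⟨?_, ?_⟩ ?_ ?_,
    fun ν _ n hn _ k => deltaAt_toLabel_sub_deltaAt_succ ν hn k⟩
  · exact fun ν hν => invLabel_toLabel ν hν.1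
  · rintro L ⟨hL, h0, hstrict, -, hmono⟩
    exact toLabel_invLabel hL h0 hstrict hmono
  · exact fun ν hν =>
      isValidLabel_toLabel C ℓ m ν ((forall_Pfun_dnu'_nonneg_iff C ℓ m ν).mp hν.2)
  · rintro L ⟨hL, h0, hstrict, hP, hmono⟩
    refine ⟨fun k p hp => (Finset.mem_Icc.mp (mem_Icc_of_mem_invLabel hp)).1, ?_⟩
    rw [forall_Pfun_dnu'_nonneg_iff, toLabel_invLabel hL h0 hstrict hmono]
    exact hP

/-- `ν ↦ (d_0(ν), …, d_s(ν))` is a bijection from the tuples of partitions with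
all `P^{(k)}_n(d_n(ν)) ≥ 0` onto the valid labels, and under it `(δ_n − δ_{n+1})(k) = ν^{(k)}_n`. -/
theorem stmt1 {r N : ℕ} (hr : 0 < r) (hN : 0 < N)
    (C : Matrix (Fin r) (Fin r) ℤ)
    (hdiag : ∀ i, C i i = 2)
    (hsym : ∀ i j, C i j = C j i)
    (hoff : ∀ i j, i ≠ j → C i j = 0 ∨ C i j = -1)
    (ℓ : Fin N → Fin r) (m : Fin N → ℕ)
    (A : Set (Fin r → Multiset ℕ))
    (hA : A = {ν | (∀ k, ∀ p ∈ ν k, 0 < p) ∧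
      ∀ n, 1 ≤ n → ∀ k, 0 ≤ Pfun C ℓ m n k (dnu' ν n)}) :
    Set.BijOn toLabel A {L | IsValidLabel C ℓ m L} ∧
    ∀ ν ∈ A, ∀ n, 1 ≤ n → n ≤ snu ν → ∀ k,
      deltaAt (toLabel ν) n k - deltaAt (toLabel ν) (n + 1) k = ((ν k).count n : ℤ) :=
  stmt1_general C ℓ m A hA
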